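/- arXiv:1002.2731 — 7 statements merged into one kernel-verified Lean document; each statement's English description precedes it below -/
import Mathlib

section
/- For every dyadic rational point m/2^k in (0,1), the Takagi function T(x) = Σ_{n≥1} 2^{-n} φ^{(n)}(x), where φ is the tent map φ(x) = min(2x, 2-2x) on [0,1] and φ^{(n)} its n-th iterate, satisfies T(k/2^m) = 2^{-m} Σ_{j=0}^{k-1} (m - 2 s_j), where s_j denotes the number of ones in the binary representation of the integer j. -/
open Filter Topology Set

noncomputable def tent (x : ℝ) : ℝ := min (2*x) (2-2*x)

noncomputable def takagi (x : ℝ) : ℝ := ∑' n : ℕ, tent^[n+1] x / 2^(n+1)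

/-! On `[0, 1]` the Takagi function satisfies `T = φ / 2 + (T ∘ φ) / 2`, and `φ` maps `k / 2^(m+1)`
to `min k (2^(m+1) - k) / 2^m`. Induction on `m` therefore reduces the formula to two identities for
`S_m(k) = ∑_{j<k} (m - 2 s_j)`: `S_{m+1}(k) = k + S_m(k)` and the symmetry `S_m(2^m - k) = S_m(k)`.
The symmetry holds because complementing the `m` binary digits, `j ↦ 2^m - 1 - j`, turns `s_j` into
`m - s_j` and so negates the summand. -/

theorem Finset.sum_range_sub_eq_sum_range_of_reflect_neg {M : Type*} [AddCommGroup M]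
    [IsAddTorsionFree M] {f : ℕ → M} {n : ℕ} (hf : ∀ i < n, f (n - 1 - i) = -f i) {k : ℕ}
    (hk : k ≤ n) : ∑ i ∈ range (n - k), f i = ∑ i ∈ range k, f i := by
  have split : ∀ j ≤ n, ∑ i ∈ range n, f i = ∑ i ∈ range j, f i - ∑ i ∈ range (n - j), f i := by
    intro j hj
    obtain ⟨l, rfl⟩ := Nat.exists_eq_add_of_le hj
    rw [Nat.add_sub_cancel_left, sum_range_add, sub_eq_add_neg, ← sum_range_reflect f l,
      ← sum_neg_distrib]
    congr 1
    refine sum_congr rfl fun i hi => ?_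
    have := hf (l - 1 - i) (by grind)
    rwa [show j + l - 1 - (l - 1 - i) = j + i by grind] at this
  have h₁ := split k hk
  have h₂ := split (n - k) (Nat.sub_le n k)
  rw [Nat.sub_sub_self hk] at h₂
  grind

theorem Nat.digits_sum_add_mul {b : ℕ} (hb : 1 < b) {d : ℕ} (hd : d < b) (q : ℕ) :
    (b.digits (d + b * q)).sum = d + (b.digits q).sum := by
  by_cases h : d = 0 ∧ q = 0
  · simp [h.1, h.2]
  · rw [Nat.digits_add b hb d q hd (by tauto), List.sum_cons]

theorem Nat.digits_sum_add_digits_sum_pow_sub_one_sub {b : ℕ} (hb : 1 < b) (r : ℕ) {i : ℕ}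
    (hi : i < b ^ r) : (b.digits i).sum + (b.digits (b ^ r - 1 - i)).sum = r * (b - 1) := by
  induction r generalizing i with
  | zero => simp_all
  | succ r ih =>
    obtain ⟨d, q, hd, rfl⟩ : ∃ d q, d < b ∧ i = d + b * q :=
      ⟨i % b, i / b, Nat.mod_lt i (by omega), (Nat.mod_add_div i b).symm⟩
    rw [pow_succ'] at hi ⊢
    obtain ⟨t, ht⟩ : ∃ t, b ^ r = q + t + 1 :=
      Nat.exists_eq_add_of_lt (Nat.lt_of_mul_lt_mul_left (by omega : b * q < b * b ^ r))
    have hcompl : b * (q + t + 1) - 1 - (d + b * q) = (b - 1 - d) + b * t := by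
      rw [mul_add, mul_add]
      omega
    have := ih (by omega : q < b ^ r)
    rw [ht, hcompl, Nat.digits_sum_add_mul hb hd, Nat.digits_sum_add_mul hb (by omega),
      add_one_mul]
    rw [ht, show q + t + 1 - 1 - q = t by omega] at this
    omega

noncomputable def takagiSum (m k : ℕ) : ℝ :=
  ∑ j ∈ Finset.range k, ((m : ℝ) - 2 * ((Nat.digits 2 j).sum : ℝ))

theorem takagiSum_succ_left (m k : ℕ) : takagiSum (m + 1) k = k + takagiSum m k := by
  simp only [takagiSum, Nat.cast_succ, add_sub_right_comm, Finset.sum_add_distrib,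
    Finset.sum_const, Finset.card_range, nsmul_one, add_comm]

theorem takagiSum_two_pow_sub (m : ℕ) {k : ℕ} (hk : k ≤ 2 ^ m) :
    takagiSum m (2 ^ m - k) = takagiSum m k := by
  refine Finset.sum_range_sub_eq_sum_range_of_reflect_neg (fun i hi => ?_) hk
  have h : ((Nat.digits 2 i).sum : ℝ) + (Nat.digits 2 (2 ^ m - 1 - i)).sum = m := by
    exact_mod_cast
      (Nat.digits_sum_add_digits_sum_pow_sub_one_sub one_lt_two m hi).trans (mul_one m)
  linear_combination (-2) * h

theorem takagiSum_min_two_pow_sub (m : ℕ) {k : ℕ} (hk : k ≤ 2 ^ m) :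
    takagiSum m (min k (2 ^ m - k)) = takagiSum m k := by
  rcases min_choice k (2 ^ m - k) with h | h <;> rw [h]
  exact takagiSum_two_pow_sub m hk

theorem mapsTo_tent : MapsTo tent (Icc 0 1) (Icc 0 1) := by
  rintro x ⟨h₀, h₁⟩
  refine ⟨le_min (by linarith) (by linarith), ?_⟩
  rcases le_total x (1 / 2) with h | h
  · exact min_le_of_left_le (by linarith)
  · exact min_le_of_right_le (by linarith)

theorem summable_tent_iterate_div_two_pow {x : ℝ} (hx : x ∈ Icc (0 : ℝ) 1) :
    Summable fun n : ℕ => tent^[n + 1] x / 2 ^ (n + 1) := by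
  refine summable_geometric_two.of_nonneg_of_le (fun n => ?_) (fun n => ?_)
  · have := (mapsTo_tent.iterate (n + 1) hx).1
    positivity
  · calc tent^[n + 1] x / 2 ^ (n + 1) ≤ 1 / 2 ^ (n + 1) := by
          gcongr
          exact (mapsTo_tent.iterate (n + 1) hx).2
      _ ≤ (1 / 2) ^ n := by
          rw [one_div_pow]
          gcongr
          · norm_num
          · omega

theorem takagi_eq_tent_div_two_add {x : ℝ} (hx : x ∈ Icc (0 : ℝ) 1) :
    takagi x = tent x / 2 + takagi (tent x) / 2 := by
  rw [takagi, (summable_tent_iterate_div_two_pow hx).tsum_eq_zero_add, takagi, ← tsum_div_const]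
  congr 1
  · simp
  · congr 1
    funext n
    rw [Function.iterate_succ_apply, pow_succ _ (n + 1)]
    ring

theorem takagi_zero : takagi 0 = 0 := by
  have h := takagi_eq_tent_div_two_add (x := 0) ⟨le_rfl, zero_le_one⟩
  rw [show tent 0 = 0 by norm_num [tent]] at h
  linarith

theorem takagi_one : takagi 1 = 0 := by
  rw [takagi_eq_tent_div_two_add ⟨zero_le_one, le_rfl⟩, show tent 1 = 0 by norm_num [tent],
    takagi_zero]
  norm_num

theorem tent_natCast_div_two_pow_succ (m : ℕ) {k : ℕ} (hk : k ≤ 2 ^ (m + 1)) :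
    tent (k / 2 ^ (m + 1)) = (min k (2 ^ (m + 1) - k) : ℕ) / 2 ^ m := by
  rw [Nat.cast_min, Nat.cast_sub hk, ← min_div_div_right (by positivity), tent]
  push_cast
  congr 1 <;> field_simp <;> ring

theorem takagi_natCast_div_two_pow (m : ℕ) {k : ℕ} (hk : k ≤ 2 ^ m) :
    takagi (k / 2 ^ m) = takagiSum m k / 2 ^ m := by
  induction m generalizing k with
  | zero =>
    interval_cases k
    · simp [takagi_zero, takagiSum]
    · simp [takagi_one, takagiSum]
  | succ m ih =>
    have hx : (k : ℝ) / 2 ^ (m + 1) ∈ Icc (0 : ℝ) 1 :=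
      ⟨by positivity, div_le_one_of_le₀ (by exact_mod_cast hk) (by positivity)⟩
    have hk' : min k (2 ^ (m + 1) - k) ≤ 2 ^ m := by
      rw [pow_succ] at *
      omega
    rw [takagi_eq_tent_div_two_add hx, tent_natCast_div_two_pow_succ m hk, ih hk',
      ← takagiSum_min_two_pow_sub (m + 1) hk, takagiSum_succ_left, pow_succ]
    ring

theorem takagi_dyadic_general (m k : ℕ) (hkm : k < 2^m) :
    takagi ((k : ℝ) / 2^m) =
      (1 / 2^m : ℝ) * ∑ j ∈ Finset.range k, ((m : ℝ) - 2 * ((Nat.digits 2 j).sum : ℝ)) := by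
  rw [one_div_mul_eq_div]
  exact takagi_natCast_div_two_pow m hkm.le

theorem takagi_dyadic (m k : ℕ) (hk : 0 < k) (hkm : k < 2^m) :
    takagi ((k : ℝ) / 2^m) =
      (1 / 2^m : ℝ) * ∑ j ∈ Finset.range k, ((m : ℝ) - 2 * ((Nat.digits 2 j).sum : ℝ)) :=
  takagi_dyadic_general m k hkm
end

section
/- Let (a_n) be a strictly increasing sequence of positive integers. If a_{n+1} - 2a_n + 2n - log₂(a_{n+1} - a_n) → -∞ as n → ∞, then a_n - 2n → ∞ as n → ∞. -/
open Filter Topology Set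

theorem Real.logb_natCast_le_self {b : ℕ} (hb : 1 < b) (n : ℕ) : Real.logb b n ≤ n := by
  rcases Nat.eq_zero_or_pos n with rfl | hn
  · simp
  rw [Real.logb_le_iff_le_rpow (by exact_mod_cast hb) (by exact_mod_cast hn), Real.rpow_natCast]
  exact_mod_cast (Nat.lt_pow_self hb).le

theorem Monotone.logb_two_sub_le_sub {a : ℕ → ℕ} (ha : Monotone a) (n : ℕ) :
    Real.logb 2 ((a (n+1) : ℝ) - a n) ≤ (a (n+1) : ℝ) - a n := by
  rw [← Nat.cast_sub (ha n.le_succ)]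
  exact_mod_cast Real.logb_natCast_le_self one_lt_two _

theorem cond_implies_an_sub_two_n_tendsto_top_general
    (a : ℕ → ℕ) (ha : StrictMono a)
    (h : Tendsto (fun n : ℕ =>
        (a (n+1) : ℝ) - 2 * (a n : ℝ) + 2 * (n + 1)
          - Real.logb 2 ((a (n+1) : ℝ) - (a n : ℝ))) atTop atBot) :
    Tendsto (fun n : ℕ => (a n : ℝ) - 2 * (n + 1)) atTop atTop := by
  -- Since `logb 2 d ≤ d`, the negated hypothesis sequence is a lower bound for `a n - 2(n+1)`.
  refine tendsto_atTop_mono (fun n => ?_) (tendsto_neg_atBot_atTop.comp h)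
  have := ha.monotone.logb_two_sub_le_sub n
  simp only [Function.comp_apply]
  linarith

theorem cond_implies_an_sub_two_n_tendsto_top
    (a : ℕ → ℕ) (ha : StrictMono a) (ha1 : 1 ≤ a 0)
    (h : Tendsto (fun n : ℕ =>
        (a (n+1) : ℝ) - 2 * (a n : ℝ) + 2 * (n + 1)
          - Real.logb 2 ((a (n+1) : ℝ) - (a n : ℝ))) atTop atBot) :
    Tendsto (fun n : ℕ => (a n : ℝ) - 2 * (n + 1)) atTop atTop :=
  cond_implies_an_sub_two_n_tendsto_top_general a ha h
end

section
/- Let x ∈ (0,1) be non-dyadic with binary digits ε_k, and write x = Σ 2^{-a_n} with (a_n) strictly increasing. Suppose D_k := Σ_{j=1}^k (1 - 2ε_j) → ∞ (i.e., a_n - 2n → ∞) and the runs of consecutive zeros in the binary expansion of x are bounded, i.e., a_{n+1} - a_n ≤ M+1 for all n and some M. Then T'(x) = +∞, where T is the Takagi function. -/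
open Filter Topology Set

def IsDyadic (x : ℝ) : Prop := ∃ k : ℤ, ∃ m : ℕ, x = (k : ℝ) / 2^m

/-!
For `0 ≤ x ≤ 1`, `T x = ∑ₙ d(2ⁿ x) / 2ⁿ`, where `d` is the distance to the nearest integer.
Take `2⁻ᵐ⁻¹ ≤ |h| < 2⁻ᵐ`. The terms `n ≥ m` change the difference quotient by at least `-2`.
Each term `n < m` has slope in `[-1, 1]`, and slope exactly `1` when the `(n + 1)`-st binary
digit of `x` is `0` and no dyadic point of rank `n + 1` separates `x` and `x + h`. Such a
separating point forces the digits of `x` at the positions `n + 2, …, m` to be all `1` (if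
`h > 0`) or all `0` (if `h < 0`), so there is at most one exceptional `n` when `h > 0`, and at
most `M` of them when `h < 0`, because runs of zeros have length at most `M`. Hence the quotient
is at least `D_m - 2M - 4`, and `D_m → ∞`.
-/

noncomputable def intDist (y : ℝ) : ℝ := |y - round y|

lemma intDist_nonneg (y : ℝ) : 0 ≤ intDist y := abs_nonneg _

lemma intDist_le_half (y : ℝ) : intDist y ≤ 1 / 2 := abs_sub_round y

lemma intDist_le_abs_sub (y : ℝ) (k : ℤ) : intDist y ≤ |y - k| := round_le y k

lemma intDist_intCast_add (k : ℤ) (y : ℝ) : intDist (k + y) = intDist y := by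
  simp only [intDist, round_intCast_add, Int.cast_add]
  ring_nf

lemma intDist_neg (y : ℝ) : intDist (-y) = intDist y := by
  refine le_antisymm ((intDist_le_abs_sub (-y) (-round y)).trans_eq ?_)
    ((intDist_le_abs_sub y (-round (-y))).trans_eq ?_) <;>
  · rw [intDist, ← abs_neg]; push_cast; ring_nf

lemma intDist_abs (y : ℝ) : intDist |y| = intDist y := by
  rcases abs_choice y with h | h <;> simp [h, intDist_neg]

lemma abs_intDist_sub_le (y z : ℝ) : |intDist y - intDist z| ≤ |y - z| := by
  have hy := (intDist_le_abs_sub y (round z)).trans (abs_sub_le y z (round z))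
  have hz := (intDist_le_abs_sub z (round y)).trans (abs_sub_le z y (round y))
  rw [abs_sub_comm z y] at hz
  rw [abs_sub_le_iff]
  constructor <;> unfold intDist at * <;> linarith

lemma intDist_of_mem_Icc {y : ℝ} {k : ℤ} (h₁ : (k : ℝ) ≤ y) (h₂ : y ≤ k + 1 / 2) :
    intDist y = y - k := by
  have hfract : Int.fract (y - k) = y - k := Int.fract_eq_self.2 ⟨by linarith, by linarith⟩
  rw [← intDist_intCast_add (-k), intDist, abs_sub_round_eq_min, Int.cast_neg, neg_add_eq_sub,
    hfract, min_eq_left (by linarith)]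

lemma tent_eq_two_mul_intDist {y : ℝ} (h₀ : 0 ≤ y) (h₁ : y ≤ 1) : tent y = 2 * intDist y := by
  rcases le_total y (1 / 2) with h | h
  · rw [intDist_of_mem_Icc (k := 0) (by simpa) (by simpa using h), tent, min_eq_left (by linarith)]
    simp
  · rw [← intDist_neg, ← intDist_intCast_add 1, intDist_of_mem_Icc (k := 0) (by push_cast; linarith)
      (by push_cast; linarith), tent, min_eq_right (by linarith)]
    push_cast; ring

lemma tent_two_mul_intDist (y : ℝ) : tent (2 * intDist y) = 2 * intDist (2 * y) := by
  rw [tent_eq_two_mul_intDist (by linarith [intDist_nonneg y]) (by linarith [intDist_le_half y])]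
  have h : 2 * intDist y = |((-(2 * round y) : ℤ) : ℝ) + 2 * y| := by
    rw [intDist, show ((-(2 * round y) : ℤ) : ℝ) + 2 * y = 2 * (y - round y) by push_cast; ring,
      abs_mul, abs_two]
  rw [h, intDist_abs, intDist_intCast_add]

lemma tent_iterate_succ {x : ℝ} (h₀ : 0 ≤ x) (h₁ : x ≤ 1) (n : ℕ) :
    tent^[n + 1] x = 2 * intDist (2 ^ n * x) := by
  induction n with
  | zero => simpa using tent_eq_two_mul_intDist h₀ h₁
  | succ n ih =>
    rw [Function.iterate_succ_apply', ih, tent_two_mul_intDist, pow_succ, mul_comm _ 2, mul_assoc]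

noncomputable def takagiTerm (n : ℕ) (y : ℝ) : ℝ := intDist (2 ^ n * y) / 2 ^ n

lemma takagi_eq_tsum_takagiTerm {x : ℝ} (h₀ : 0 ≤ x) (h₁ : x ≤ 1) :
    takagi x = ∑' n, takagiTerm n x := by
  refine tsum_congr fun n => ?_
  rw [tent_iterate_succ h₀ h₁, takagiTerm, pow_succ]
  field_simp

lemma abs_takagiTerm_sub_le_half_pow (n : ℕ) (y z : ℝ) :
    |takagiTerm n y - takagiTerm n z| ≤ (1 / 2) ^ (n + 1) := by
  have hy := intDist_nonneg (2 ^ n * y)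
  have hz := intDist_nonneg (2 ^ n * z)
  have hy' := intDist_le_half (2 ^ n * y)
  have hz' := intDist_le_half (2 ^ n * z)
  rw [takagiTerm, takagiTerm, ← sub_div, abs_div, abs_pow, abs_two,
    div_le_iff₀ (pow_pos two_pos n), pow_succ, mul_right_comm, ← mul_pow]
  norm_num
  rw [abs_sub_le_iff]
  constructor <;> linarith

lemma summable_takagiTerm (y : ℝ) : Summable fun n => takagiTerm n y := by
  refine Summable.of_nonneg_of_le (fun n => div_nonneg (intDist_nonneg _) (by positivity))
    (fun n => ?_) (summable_geometric_two.mul_left (1 / 2))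
  rw [takagiTerm, div_le_iff₀ (by positivity), mul_assoc, ← mul_pow]
  norm_num
  exact intDist_le_half _

lemma abs_takagiTerm_sub_le (n : ℕ) (y z : ℝ) : |takagiTerm n y - takagiTerm n z| ≤ |y - z| := by
  rw [takagiTerm, takagiTerm, ← sub_div, abs_div, abs_pow, abs_two,
    div_le_iff₀ (pow_pos two_pos n)]
  calc _ ≤ |2 ^ n * y - 2 ^ n * z| := abs_intDist_sub_le _ _
    _ = |y - z| * 2 ^ n := by rw [← mul_sub, abs_mul, abs_of_pos (by positivity), mul_comm]

lemma intDist_sub_intDist_of_floor_eq {y z : ℝ} (hy : Int.fract y < 1 / 2)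
    (hyz : ⌊2 * z⌋ = ⌊2 * y⌋) : intDist z - intDist y = z - y := by
  have hfloor : ⌊2 * y⌋ = 2 * ⌊y⌋ := by
    rw [Int.floor_eq_iff]
    push_cast
    constructor <;> linarith [Int.floor_le y, Int.fract_nonneg y, Int.self_sub_floor y]
  have hz := Int.floor_eq_iff.1 (hyz.trans hfloor)
  push_cast at hz
  rw [intDist_of_mem_Icc (k := ⌊y⌋) (by linarith) (by linarith),
    intDist_of_mem_Icc (k := ⌊y⌋) (Int.floor_le y) (by linarith [Int.self_sub_floor y])]
  ring

lemma takagiTerm_sub_of_floor_eq {n : ℕ} {y z : ℝ} (hy : Int.fract (2 ^ n * y) < 1 / 2)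
    (hyz : ⌊2 ^ (n + 1) * z⌋ = ⌊2 ^ (n + 1) * y⌋) : takagiTerm n z - takagiTerm n y = z - y := by
  rw [pow_succ, mul_comm _ 2, mul_assoc, mul_assoc] at hyz
  rw [takagiTerm, takagiTerm, ← sub_div, intDist_sub_intDist_of_floor_eq hy hyz]
  field_simp

lemma hasSum_half_pow (m : ℕ) : HasSum (fun i => (1 / 2 : ℝ) ^ (i + m + 1)) ((1 / 2) ^ m) := by
  convert hasSum_geometric_two' ((1 / 2 : ℝ) ^ m) using 2 with i
  rw [pow_succ, pow_add]
  field_simp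
  rw [← mul_pow]
  norm_num

lemma abs_tsum_add_le_half_pow {f : ℕ → ℝ} (hf : ∀ n, |f n| ≤ (1 / 2) ^ (n + 1)) (m : ℕ) :
    |∑' i, f (i + m)| ≤ (1 / 2) ^ m :=
  tsum_of_norm_bounded (hasSum_half_pow m) fun i => (Real.norm_eq_abs _).trans_le (hf (i + m))

/-- `D_m`; the `(n + 1)`-st binary digit of `x` is `0` iff `Int.fract (2 ^ n * x) < 1 / 2`. -/
noncomputable def digitBalance (x : ℝ) (m : ℕ) : ℝ :=
  ∑ n ∈ Finset.range m, if Int.fract (2 ^ n * x) < 1 / 2 then 1 else -1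

/-- The indices `n < m` such that the `(n + 1)`-st binary digit of `x` is `0`, but a dyadic point
of rank `n + 1` separates `x` and `x + h`. -/
noncomputable def crossings (x h : ℝ) (m : ℕ) : Finset ℕ :=
  {n ∈ Finset.range m | Int.fract (2 ^ n * x) < 1 / 2 ∧ ⌊2 ^ (n + 1) * (x + h)⌋ ≠ ⌊2 ^ (n + 1) * x⌋}

section SlopeBound

variable {x h : ℝ} {m : ℕ}

lemma crossings_subset_range : crossings x h m ⊆ Finset.range m := Finset.filter_subset _ _

lemma takagi_sub_eq_sum_add_tsum (hx : x ∈ Icc 0 1) (hxh : x + h ∈ Icc 0 1) (m : ℕ) :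
    takagi (x + h) - takagi x = ∑ n ∈ Finset.range m, (takagiTerm n (x + h) - takagiTerm n x) +
      ∑' i, (takagiTerm (i + m) (x + h) - takagiTerm (i + m) x) := by
  rw [takagi_eq_tsum_takagiTerm hxh.1 hxh.2, takagi_eq_tsum_takagiTerm hx.1 hx.2,
    ← (summable_takagiTerm _).tsum_sub (summable_takagiTerm _),
    ((summable_takagiTerm _).sub (summable_takagiTerm _)).sum_add_tsum_nat_add]

lemma neg_one_le_takagiTerm_slope (hh : h ≠ 0) (n : ℕ) :
    -1 ≤ (takagiTerm n (x + h) - takagiTerm n x) / h := by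
  have hq : |(takagiTerm n (x + h) - takagiTerm n x) / h| ≤ 1 := by
    rw [abs_div, div_le_one (abs_pos.2 hh)]
    simpa using abs_takagiTerm_sub_le n (x + h) x
  linarith [neg_abs_le ((takagiTerm n (x + h) - takagiTerm n x) / h)]

lemma sign_sub_le_takagiTerm_slope (hh : h ≠ 0) {n : ℕ} (hn : n ∈ Finset.range m) :
    (if Int.fract (2 ^ n * x) < 1 / 2 then 1 else -1) - (if n ∈ crossings x h m then 2 else 0) ≤
      (takagiTerm n (x + h) - takagiTerm n x) / h := by
  have hslope := neg_one_le_takagiTerm_slope (x := x) hh n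
  simp only [crossings, Finset.mem_filter]
  split_ifs with hdigit hcross hcross <;> try linarith
  have hfloor : ⌊2 ^ (n + 1) * (x + h)⌋ = ⌊2 ^ (n + 1) * x⌋ := by
    by_contra hne
    exact hcross ⟨hn, hdigit, hne⟩
  rw [takagiTerm_sub_of_floor_eq hdigit hfloor, add_sub_cancel_left, div_self hh]
  norm_num

lemma sum_sign_sub_eq (m : ℕ) :
    ∑ n ∈ Finset.range m, ((if Int.fract (2 ^ n * x) < 1 / 2 then (1 : ℝ) else -1) -
      (if n ∈ crossings x h m then 2 else 0)) = digitBalance x m - 2 * (crossings x h m).card := by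
  rw [Finset.sum_sub_distrib, Finset.sum_ite_mem,
    Finset.inter_eq_right.2 crossings_subset_range, Finset.sum_const, nsmul_eq_mul, mul_comm,
    digitBalance]

lemma neg_two_le_tail_slope (hh : h ≠ 0) (hm : (1 / 2) ^ (m + 1) ≤ |h|) :
    -2 ≤ (∑' i, (takagiTerm (i + m) (x + h) - takagiTerm (i + m) x)) / h := by
  have htail := abs_tsum_add_le_half_pow (fun n => abs_takagiTerm_sub_le_half_pow n (x + h) x) m
  have hq : |(∑' i, (takagiTerm (i + m) (x + h) - takagiTerm (i + m) x)) / h| ≤ 2 := by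
    rw [abs_div, div_le_iff₀ (abs_pos.2 hh)]
    rw [pow_succ] at hm
    linarith
  linarith [neg_abs_le ((∑' i, (takagiTerm (i + m) (x + h) - takagiTerm (i + m) x)) / h)]

theorem digitBalance_sub_le_takagi_slope (hx : x ∈ Icc 0 1) (hxh : x + h ∈ Icc 0 1) (hh : h ≠ 0)
    (hm : (1 / 2) ^ (m + 1) ≤ |h|) :
    digitBalance x m - 2 * (crossings x h m).card - 2 ≤ (takagi (x + h) - takagi x) / h := by
  rw [takagi_sub_eq_sum_add_tsum hx hxh m, add_div, Finset.sum_div, ← sum_sign_sub_eq]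
  linarith [Finset.sum_le_sum fun n hn => sign_sub_le_takagiTerm_slope (x := x) hh (m := m) hn,
    neg_two_le_tail_slope (x := x) hh hm]

end SlopeBound

section Crossings

lemma exists_intCast_mem_Ioc_of_floor_ne {y z : ℝ} (hyz : y ≤ z) (hfloor : ⌊y⌋ ≠ ⌊z⌋) :
    ∃ L : ℤ, y < L ∧ (L : ℝ) ≤ z := by
  refine ⟨⌊z⌋, ?_, Int.floor_le z⟩
  by_contra! h
  exact hfloor (le_antisymm (Int.floor_mono hyz) (Int.le_floor.2 h))

lemma half_lt_fract_of_lt_intCast {u : ℝ} {L : ℤ} (h₁ : u < L) (h₂ : L - u < 1 / 2) :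
    1 / 2 < Int.fract u := by
  have hfloor : ⌊u⌋ = L - 1 := by
    rw [Int.floor_eq_iff]
    push_cast
    constructor <;> linarith
  rw [Int.fract, hfloor]
  push_cast
  linarith

lemma fract_lt_half_of_intCast_le {v : ℝ} {L : ℤ} (h₁ : (L : ℝ) ≤ v) (h₂ : v - L < 1 / 2) :
    Int.fract v < 1 / 2 := by
  have hfloor : ⌊v⌋ = L := by
    rw [Int.floor_eq_iff]
    constructor <;> linarith
  rw [Int.fract, hfloor]
  exact h₂

/-- If a dyadic point of rank `k` lies in `(y, z]` and `z - y < 2⁻ᵐ`, then the binary digits of `y`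
at the positions `k + 1, …, m` are all `1` and those of `z` are all `0`. -/
lemma fract_two_pow_of_floor_ne {y z : ℝ} {k r m : ℕ} (hyz : y < z) (hzy : z - y < (1 / 2) ^ m)
    (hfloor : ⌊2 ^ k * y⌋ ≠ ⌊2 ^ k * z⌋) (hkr : k ≤ r) (hrm : r < m) :
    1 / 2 < Int.fract (2 ^ r * y) ∧ Int.fract (2 ^ r * z) < 1 / 2 := by
  obtain ⟨L, hyL, hLz⟩ := exists_intCast_mem_Ioc_of_floor_ne (by gcongr) hfloor
  have hscale : (2 : ℝ) ^ r = 2 ^ (r - k) * 2 ^ k := by rw [← pow_add, Nat.sub_add_cancel hkr]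
  have hpos : (0 : ℝ) < 2 ^ (r - k) := by positivity
  have hy : 2 ^ r * y < (L * 2 ^ (r - k) : ℤ) := by
    push_cast
    rw [hscale, mul_assoc, mul_comm (L : ℝ)]
    exact mul_lt_mul_of_pos_left hyL hpos
  have hz : ((L * 2 ^ (r - k) : ℤ) : ℝ) ≤ 2 ^ r * z := by
    push_cast
    rw [hscale, mul_assoc, mul_comm (L : ℝ)]
    exact mul_le_mul_of_nonneg_left hLz hpos.le
  have hgap : 2 ^ r * z - 2 ^ r * y < 1 / 2 := by
    have hm : (1 / 2 : ℝ) ^ m ≤ (1 / 2) ^ (r + 1) :=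
      pow_le_pow_of_le_one (by norm_num) (by norm_num) hrm
    calc 2 ^ r * z - 2 ^ r * y = 2 ^ r * (z - y) := by ring
      _ < 2 ^ r * (1 / 2) ^ (r + 1) := by gcongr; exact hzy.trans_le hm
      _ = 1 / 2 := by rw [pow_succ, ← mul_assoc, ← mul_pow]; norm_num
  exact ⟨half_lt_fract_of_lt_intCast hy (by linarith), fract_lt_half_of_intCast_le hz (by linarith)⟩

variable {x h : ℝ} {m : ℕ}

lemma card_crossings_le_one (hpos : 0 < h) (hsmall : h < (1 / 2) ^ m) :
    (crossings x h m).card ≤ 1 := by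
  suffices hmin : ∀ n₁ ∈ crossings x h m, ∀ n₂ ∈ crossings x h m, ¬ n₁ < n₂ by
    refine Finset.card_le_one.2 fun n₁ h₁ n₂ h₂ => ?_
    rcases lt_trichotomy n₁ n₂ with hlt | heq | hgt
    exacts [(hmin _ h₁ _ h₂ hlt).elim, heq, (hmin _ h₂ _ h₁ hgt).elim]
  intro n₁ h₁ n₂ h₂ hlt
  simp only [crossings, Finset.mem_filter, Finset.mem_range] at h₁ h₂
  have := fract_two_pow_of_floor_ne (y := x) (z := x + h) (by linarith) (by simpa using hsmall)
    (Ne.symm h₁.2.2) hlt h₂.1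
  linarith [this.1, h₂.2.1]

lemma fract_lt_half_of_mem_crossings (hneg : h < 0) (hsmall : -h < (1 / 2) ^ m) {n r : ℕ}
    (hn : n ∈ crossings x h m) (hnr : n ≤ r) (hrm : r < m) : Int.fract (2 ^ r * x) < 1 / 2 := by
  simp only [crossings, Finset.mem_filter, Finset.mem_range] at hn
  rcases hnr.eq_or_lt with rfl | hlt
  · exact hn.2.1
  · exact (fract_two_pow_of_floor_ne (y := x + h) (z := x) (by linarith) (by linarith) hn.2.2 hlt
      hrm).2

end Crossings

section Digits

variable {a : ℕ → ℕ}

lemma StrictMono.exists_le_lt_succ (ha : StrictMono a) {p : ℕ} (hp : a 0 ≤ p) :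
    ∃ j, a j ≤ p ∧ p < a (j + 1) := by
  classical
  have hex : ∃ j, p < a (j + 1) := ⟨p, (Nat.lt_succ_self p).trans_le (ha.id_le (p + 1))⟩
  refine ⟨Nat.find hex, ?_, Nat.find_spec hex⟩
  rcases hj : Nat.find hex with _ | i
  · exact hp
  · exact not_lt.1 (Nat.find_min hex (hj ▸ Nat.lt_succ_self i))

lemma le_add_of_forall_notMem_range (ha : StrictMono a) {M : ℕ} (hM : ∀ n, a (n + 1) - a n ≤ M + 1)
    {p q : ℕ} (hq : a 0 ≤ q) (hgap : ∀ r, p < r → r ≤ q → r ∉ range a) : q ≤ p + M := by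
  have hp : a 0 ≤ p := by
    by_contra! h
    exact hgap (a 0) h hq ⟨0, rfl⟩
  obtain ⟨j, hj, hjp⟩ := ha.exists_le_lt_succ hp
  by_contra! hqp
  exact hgap (a (j + 1)) hjp (by have := hM j; omega) ⟨j + 1, rfl⟩

theorem card_crossings_le {x h : ℝ} {m M : ℕ} (ha : StrictMono a)
    (hM : ∀ n, a (n + 1) - a n ≤ M + 1)
    (hdigit : ∀ n, n + 1 ∈ range a ↔ 1 / 2 ≤ Int.fract (2 ^ n * x))
    (hm : a 0 ≤ m) (hh : h ≠ 0) (hsmall : |h| < (1 / 2) ^ m) :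
    (crossings x h m).card ≤ M + 1 := by
  rcases hh.lt_or_gt with hneg | hpos
  · rw [abs_of_neg hneg] at hsmall
    rcases (crossings x h m).eq_empty_or_nonempty with hempty | hne
    · simp [hempty]
    set n₀ := (crossings x h m).min' hne
    have hzeros : ∀ r, n₀ < r → r ≤ m → r ∉ range a := by
      intro r h₁ h₂ hr
      obtain ⟨s, rfl⟩ : ∃ s, r = s + 1 := ⟨r - 1, by omega⟩
      have := fract_lt_half_of_mem_crossings hneg hsmall (Finset.min'_mem _ hne) (by omega) h₂
      exact (hdigit s).1 hr |>.not_gt this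
    have hrun := le_add_of_forall_notMem_range ha hM hm hzeros
    calc (crossings x h m).card ≤ (Finset.Ico n₀ m).card :=
          Finset.card_le_card fun n hn => Finset.mem_Ico.2
            ⟨Finset.min'_le _ _ hn, Finset.mem_range.1 (crossings_subset_range hn)⟩
      _ ≤ M + 1 := by simp only [Nat.card_Ico]; omega
  · rw [abs_of_pos hpos] at hsmall
    exact (card_crossings_le_one hpos hsmall).trans (by omega)

end Digits

lemma isDyadic_of_two_pow_mul_eq {x : ℝ} (p : ℕ) (N : ℤ) (h : 2 ^ p * x = N) : IsDyadic x :=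
  ⟨N, p, by rw [← h]; field_simp⟩

lemma two_pow_mul_half_pow {p k : ℕ} (hk : k ≤ p) : (2 : ℝ) ^ p * (1 / 2) ^ k = 2 ^ (p - k) := by
  rw [← Nat.sub_add_cancel hk, pow_add, mul_assoc, ← mul_pow, Nat.add_sub_cancel]
  norm_num

lemma two_pow_mul_tsum_indicator_eq (S : Set ℕ) (p : ℕ) :
    ∃ N : ℤ, ∃ t : ℝ, 0 ≤ t ∧ t ≤ 1 / 2 ∧
      2 ^ p * ∑' k, S.indicator (fun k => (1 / 2 : ℝ) ^ k) k =
        N + S.indicator (fun _ => 1 / 2) (p + 1) + t := by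
  classical
  set g := S.indicator (fun k => (1 / 2 : ℝ) ^ k)
  have hg : Summable g := summable_geometric_two.indicator S
  have hg0 : ∀ k, 0 ≤ g k := fun k => Set.indicator_nonneg (fun _ _ => by positivity) k
  have hhead : 2 ^ p * ∑ k ∈ Finset.range (p + 1), g k =
      ((∑ k ∈ Finset.range (p + 1), S.indicator (fun k => (2 : ℤ) ^ (p - k)) k : ℤ) : ℝ) := by
    rw [Finset.mul_sum]
    push_cast
    refine Finset.sum_congr rfl fun k hk => ?_
    by_cases hkS : k ∈ S
    · simp only [g, Set.indicator_of_mem hkS]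
      push_cast
      exact two_pow_mul_half_pow (Nat.lt_succ_iff.1 (Finset.mem_range.1 hk))
    · simp [g, hkS]
  have hdigit : 2 ^ p * g (p + 1) = S.indicator (fun _ => 1 / 2) (p + 1) := by
    by_cases hpS : p + 1 ∈ S
    · simp only [g, Set.indicator_of_mem hpS, pow_succ, ← mul_assoc, ← mul_pow]
      norm_num
    · simp [g, hpS]
  have htail : ∑' i, g (i + (p + 2)) ≤ (1 / 2) ^ (p + 1) := by
    refine (le_abs_self _).trans ?_
    rw [← Real.norm_eq_abs]
    refine tsum_of_norm_bounded (hasSum_half_pow (p + 1)) fun i => ?_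
    rw [Real.norm_eq_abs, abs_of_nonneg (hg0 _), show i + (p + 1) + 1 = i + (p + 2) by ring]
    exact Set.indicator_le_self' (fun _ _ => by positivity) _
  refine ⟨∑ k ∈ Finset.range (p + 1), S.indicator (fun k => (2 : ℤ) ^ (p - k)) k,
    2 ^ p * ∑' i, g (i + (p + 2)), mul_nonneg (by positivity) (tsum_nonneg fun i => hg0 _), ?_, ?_⟩
  · calc 2 ^ p * ∑' i, g (i + (p + 2)) ≤ 2 ^ p * (1 / 2) ^ (p + 1) := by gcongr
      _ = 1 / 2 := by rw [pow_succ, ← mul_assoc, ← mul_pow]; norm_num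
  · rw [← hg.sum_add_tsum_nat_add (p + 2), Finset.sum_range_succ, mul_add, mul_add, hhead, hdigit]

theorem mem_iff_half_le_fract {S : Set ℕ} {x : ℝ}
    (hx : x = ∑' k, S.indicator (fun k => (1 / 2 : ℝ) ^ k) k) (hnd : ¬ IsDyadic x) (p : ℕ) :
    p + 1 ∈ S ↔ 1 / 2 ≤ Int.fract (2 ^ p * x) := by
  obtain ⟨N, t, ht₀, ht₁, heq⟩ := two_pow_mul_tsum_indicator_eq S p
  rw [← hx] at heq
  by_cases hpS : p + 1 ∈ S
  · rw [Set.indicator_of_mem hpS] at heq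
    have ht : t ≠ 1 / 2 := fun ht =>
      hnd (isDyadic_of_two_pow_mul_eq p (N + 1) (by rw [heq, ht]; push_cast; ring))
    rw [heq, add_assoc, Int.fract_intCast_add,
      Int.fract_eq_self.2 ⟨by linarith, by linarith [lt_of_le_of_ne ht₁ ht]⟩]
    simpa [hpS] using ht₀
  · rw [Set.indicator_of_notMem hpS, add_zero] at heq
    have ht : t ≠ 1 / 2 := fun ht =>
      hnd (isDyadic_of_two_pow_mul_eq (p + 1) (2 * N + 1)
        (by rw [pow_succ, mul_right_comm, heq, ht]; push_cast; ring))
    rw [heq, Int.fract_intCast_add, Int.fract_eq_self.2 ⟨ht₀, by linarith⟩]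
    simpa [hpS] using lt_of_le_of_ne ht₁ ht

theorem mem_range_iff_half_le_fract {a : ℕ → ℕ} {x : ℝ} (ha : StrictMono a)
    (hxa : x = ∑' n : ℕ, (1 / 2 : ℝ) ^ (a n)) (hnd : ¬ IsDyadic x) (p : ℕ) :
    p + 1 ∈ range a ↔ 1 / 2 ≤ Int.fract (2 ^ p * x) :=
  mem_iff_half_le_fract (by rw [hxa, ← tsum_range (fun k => (1 / 2 : ℝ) ^ k) ha.injective,
    tsum_subtype]) hnd p

section DigitBalance

variable {a : ℕ → ℕ} {x : ℝ}

lemma digitBalance_eq_sub_card (x : ℝ) (m : ℕ) :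
    digitBalance x m = m - 2 * {n ∈ Finset.range m | 1 / 2 ≤ Int.fract (2 ^ n * x)}.card := by
  have hterm : ∀ n : ℕ, (if Int.fract (2 ^ n * x) < 1 / 2 then (1 : ℝ) else -1) =
      1 - 2 * if 1 / 2 ≤ Int.fract (2 ^ n * x) then 1 else 0 := by
    intro n
    split_ifs <;> linarith
  rw [digitBalance, Finset.sum_congr rfl fun n _ => hterm n, Finset.sum_sub_distrib,
    ← Finset.mul_sum, Finset.sum_boole, Finset.sum_const, Finset.card_range, nsmul_one]

lemma card_filter_half_le_fract_le (ha : StrictMono a)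
    (hdigit : ∀ n, n + 1 ∈ range a ↔ 1 / 2 ≤ Int.fract (2 ^ n * x)) {j m : ℕ}
    (hjm : m < a (j + 1)) :
    {n ∈ Finset.range m | 1 / 2 ≤ Int.fract (2 ^ n * x)}.card ≤ j + 1 := by
  calc _ ≤ ((Finset.range (j + 1)).image fun i => a i - 1).card := by
        refine Finset.card_le_card fun n hn => ?_
        rw [Finset.mem_filter, Finset.mem_range, ← hdigit] at hn
        obtain ⟨hnm, i, hi⟩ := hn
        exact Finset.mem_image.2 ⟨i, Finset.mem_range.2 (ha.lt_iff_lt.1 (by omega)), by omega⟩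
    _ ≤ j + 1 := Finset.card_image_le.trans_eq (Finset.card_range _)

lemma sub_le_digitBalance (ha : StrictMono a)
    (hdigit : ∀ n, n + 1 ∈ range a ↔ 1 / 2 ≤ Int.fract (2 ^ n * x)) {j m : ℕ} (hj : a j ≤ m)
    (hjm : m < a (j + 1)) : (a j : ℝ) - 2 * (j + 1) ≤ digitBalance x m := by
  have hcard : ({n ∈ Finset.range m | 1 / 2 ≤ Int.fract (2 ^ n * x)}.card : ℝ) ≤ j + 1 := by
    exact_mod_cast card_filter_half_le_fract_le ha hdigit hjm
  have hjm' : (a j : ℝ) ≤ m := by exact_mod_cast hj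
  rw [digitBalance_eq_sub_card]
  linarith

theorem tendsto_digitBalance (ha : StrictMono a)
    (hdigit : ∀ n, n + 1 ∈ range a ↔ 1 / 2 ≤ Int.fract (2 ^ n * x))
    (hD : Tendsto (fun n : ℕ => (a n : ℝ) - 2 * (n + 1)) atTop atTop) :
    Tendsto (digitBalance x) atTop atTop := by
  refine tendsto_atTop.2 fun C => ?_
  obtain ⟨N, hN⟩ := eventually_atTop.1 (hD.eventually_ge_atTop C)
  refine eventually_atTop.2 ⟨a N, fun m hm => ?_⟩
  obtain ⟨j, hj, hjm⟩ := ha.exists_le_lt_succ ((ha.monotone (Nat.zero_le N)).trans hm)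
  have hNj : N ≤ j := Nat.lt_succ_iff.1 (ha.lt_iff_lt.1 (hm.trans_lt hjm))
  exact (hN j hNj).trans (sub_le_digitBalance ha hdigit hj hjm)

end DigitBalance

lemma exists_half_pow_succ_le_lt {t : ℝ} (ht : 0 < t) {N : ℕ} (htN : t < (1 / 2) ^ N) :
    ∃ m, N ≤ m ∧ (1 / 2) ^ (m + 1) ≤ t ∧ t < (1 / 2) ^ m := by
  classical
  have hex : ∃ k, (1 / 2 : ℝ) ^ k ≤ t :=
    (exists_pow_lt_of_lt_one ht (by norm_num : (1 / 2 : ℝ) < 1)).imp fun _ => le_of_lt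
  have hNk : N < Nat.find hex := by
    by_contra! h
    exact (Nat.find_spec hex).not_gt
      (htN.trans_le (pow_le_pow_of_le_one (by norm_num) (by norm_num) h))
  refine ⟨Nat.find hex - 1, by omega, ?_, not_le.1 (Nat.find_min hex (by omega))⟩
  rw [Nat.sub_add_cancel (by omega)]
  exact Nat.find_spec hex

theorem takagi_deriv_top_of_bounded_zero_runs_general
    (x : ℝ) (hx : x ∈ Set.Ioo (0:ℝ) 1) (hnd : ¬ IsDyadic x)
    (a : ℕ → ℕ) (ha : StrictMono a)
    (hxa : x = ∑' n : ℕ, (1/2 : ℝ)^(a n))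
    (hD : Tendsto (fun n : ℕ => (a n : ℝ) - 2 * (n + 1)) atTop atTop)
    (M : ℕ) (hM : ∀ n, a (n+1) - a n ≤ M + 1) :
    Tendsto (fun h => (takagi (x + h) - takagi x) / h) (𝓝[≠] (0:ℝ)) atTop := by
  have hdigit := mem_range_iff_half_le_fract ha hxa hnd
  refine tendsto_atTop.2 fun b => ?_
  obtain ⟨N, hN⟩ := eventually_atTop.1
    ((tendsto_digitBalance ha hdigit hD).eventually_ge_atTop (b + 2 * M + 4))
  have hsmall : ∀ᶠ h in 𝓝 (0 : ℝ), |h| < (1 / 2) ^ max N (a 0) ∧ x + h ∈ Icc 0 1 :=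
    ((continuous_abs.tendsto' 0 0 abs_zero).eventually (gt_mem_nhds (by positivity))).and
      (((continuous_const.add continuous_id).tendsto' 0 x (add_zero x)).eventually
        (Icc_mem_nhds hx.1 hx.2))
  filter_upwards [eventually_nhdsWithin_of_eventually_nhds hsmall, self_mem_nhdsWithin]
    with h ⟨hhN, hxh⟩ hh
  obtain ⟨m, hNm, hm₁, hm₂⟩ := exists_half_pow_succ_le_lt (abs_pos.2 hh) hhN
  have hslope := digitBalance_sub_le_takagi_slope (Ioo_subset_Icc_self hx) hxh hh hm₁
  have hcard : ((crossings x h m).card : ℝ) ≤ M + 1 := by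
    exact_mod_cast card_crossings_le ha hM hdigit (le_of_max_le_right hNm) hh hm₂
  linarith [hN m (le_of_max_le_left hNm)]

theorem takagi_deriv_top_of_bounded_zero_runs
    (x : ℝ) (hx : x ∈ Set.Ioo (0:ℝ) 1) (hnd : ¬ IsDyadic x)
    (a : ℕ → ℕ) (ha : StrictMono a) (ha1 : 1 ≤ a 0)
    (hxa : x = ∑' n : ℕ, (1/2 : ℝ)^(a n))
    (hD : Tendsto (fun n : ℕ => (a n : ℝ) - 2 * (n + 1)) atTop atTop)
    (M : ℕ) (hM : ∀ n, a (n+1) - a n ≤ M + 1) :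
    Tendsto (fun h => (takagi (x + h) - takagi x) / h) (𝓝[≠] (0:ℝ)) atTop :=
  takagi_deriv_top_of_bounded_zero_runs_general x hx hnd a ha hxa hD M hM
end

section
/- Let (a_n) be a strictly increasing sequence of positive integers with limsup_{n→∞} a_{n+1}/a_n > 2. Then the sequence a_{n+1} - 2a_n + 2n - log₂(a_{n+1} - a_n) does not tend to -∞; in fact, it is ≥ 2n - C infinitely often for some constant C. -/
open Filter Topology Set

/-!
Fix `2 < b < limsup a (n+1) / a n` and `ε = b - 2`. Whenever `a (n+1) > (2 + ε) a n`, the excess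
`d = a (n+1) - 2 a n` exceeds `ε a n`, so the gap `a (n+1) - a n = d + a n` is at most `(1 + 1/ε) d`.
As `log₂ d ≤ d`, the gap's logarithm is at most `d + log₂ (1 + 1/ε)`, and the expression is at
least `2 (n + 1) - log₂ (1 + 1/ε)`; this happens infinitely often.
-/

lemma Real.logb_two_le_self {x : ℝ} (hx : 0 < x) : Real.logb 2 x ≤ x := by
  rw [Real.logb_le_iff_le_rpow one_lt_two hx, Real.rpow_def_of_pos two_pos]
  have he := Real.exp_one_gt_d9
  have hl := Real.log_two_gt_d9
  have hel : 1 ≤ Real.exp 1 * Real.log 2 := by nlinarith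
  calc x ≤ Real.exp 1 * (Real.log 2 * x) := by nlinarith
    _ ≤ Real.exp (Real.log 2 * x) := Real.exp_one_mul_le_exp

lemma logb_two_sub_le_of_two_add_mul_lt {ε x y : ℝ} (hε : 0 < ε) (hx : 0 ≤ x)
    (hxy : (2 + ε) * x < y) :
    Real.logb 2 (y - x) ≤ y - 2 * x + Real.logb 2 (1 + 1 / ε) := by
  set d := y - 2 * x
  have hd : ε * x < d := by linarith
  have hd_pos : 0 < d := by nlinarith
  have hgap : y - x ≤ d * (1 + 1 / ε) := by
    have : x ≤ d / ε := by rw [le_div_iff₀ hε]; linarith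
    calc y - x = d + x := by ring
      _ ≤ d + d / ε := by linarith
      _ = d * (1 + 1 / ε) := by ring
  calc Real.logb 2 (y - x) ≤ Real.logb 2 (d * (1 + 1 / ε)) :=
        Real.logb_le_logb_of_le one_lt_two (by linarith) hgap
    _ = Real.logb 2 d + Real.logb 2 (1 + 1 / ε) :=
        Real.logb_mul hd_pos.ne' (by positivity)
    _ ≤ d + Real.logb 2 (1 + 1 / ε) := by gcongr; exact Real.logb_two_le_self hd_pos

lemma Filter.Frequently.not_tendsto_atBot {α β : Type*} [Preorder β] [NoMinOrder β]
    {l : Filter α} {f : α → β} {c : β} (h : ∃ᶠ x in l, c ≤ f x) : ¬ Tendsto f l atBot :=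
  fun hf => by
    obtain ⟨x, hcf, hfc⟩ := (h.and_eventually (hf.eventually_lt_atBot c)).exists
    exact hfc.not_ge hcf

theorem cond_fails_of_limsup_ratio_gt_two_general
    (a : ℕ → ℕ)
    (hsup : 2 < Filter.limsup (fun n : ℕ => (a (n+1) : ℝ) / (a n : ℝ)) atTop) :
    ¬ Tendsto (fun n : ℕ =>
        (a (n+1) : ℝ) - 2 * (a n : ℝ) + 2 * (n + 1)
          - Real.logb 2 ((a (n+1) : ℝ) - (a n : ℝ))) atTop atBot ∧
    ∃ C : ℝ, ∃ᶠ n : ℕ in atTop,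
      2 * ((n : ℝ) + 1) - C ≤
        (a (n+1) : ℝ) - 2 * (a n : ℝ) + 2 * (n + 1)
          - Real.logb 2 ((a (n+1) : ℝ) - (a n : ℝ)) := by
  obtain ⟨b, h2b, hb⟩ := exists_between hsup
  have hfreq : ∃ᶠ n in atTop, b < (a (n+1) : ℝ) / a n :=
    frequently_lt_of_lt_limsup (isCoboundedUnder_le_of_le atTop fun n => by positivity) hb
  set C := Real.logb 2 (1 + 1 / (b - 2))
  have hbound : ∃ᶠ n : ℕ in atTop, 2 * ((n : ℝ) + 1) - C ≤
      (a (n+1) : ℝ) - 2 * (a n : ℝ) + 2 * (n + 1) - Real.logb 2 ((a (n+1) : ℝ) - (a n : ℝ)) := by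
    refine hfreq.mono fun n hn => ?_
    -- `a n = 0` would make the ratio `0` (division by zero)
    have ha : 0 < (a n : ℝ) := by
      by_contra! h
      rw [le_antisymm h (Nat.cast_nonneg _), div_zero] at hn
      linarith
    have := logb_two_sub_le_of_two_add_mul_lt (sub_pos.2 h2b) ha.le
      (by rwa [add_sub_cancel, ← lt_div_iff₀ ha])
    linarith
  refine ⟨(hbound.mono fun n hn => ?_).not_tendsto_atBot (c := -C), _, hbound⟩
  linarith [(n.cast_nonneg : (0 : ℝ) ≤ n)]

theorem cond_fails_of_limsup_ratio_gt_two
    (a : ℕ → ℕ) (ha : StrictMono a) (ha1 : 1 ≤ a 0)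
    (hsup : 2 < Filter.limsup (fun n : ℕ => (a (n+1) : ℝ) / (a n : ℝ)) atTop) :
    ¬ Tendsto (fun n : ℕ =>
        (a (n+1) : ℝ) - 2 * (a n : ℝ) + 2 * (n + 1)
          - Real.logb 2 ((a (n+1) : ℝ) - (a n : ℝ))) atTop atBot ∧
    ∃ C : ℝ, ∃ᶠ n : ℕ in atTop,
      2 * ((n : ℝ) + 1) - C ≤
        (a (n+1) : ℝ) - 2 * (a n : ℝ) + 2 * (n + 1)
          - Real.logb 2 ((a (n+1) : ℝ) - (a n : ℝ)) :=
  cond_fails_of_limsup_ratio_gt_two_general a hsup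
end

section
/- Let (a_n) be a strictly increasing sequence of positive integers such that for some 0 < ε ≤ 1, limsup_{n→∞} a_{n+1}/a_n = 2 - ε and liminf_{n→∞} a_n/n > 2/ε. Then a_{n+1} - 2a_n + 2n - log₂(a_{n+1} - a_n) → -∞ as n → ∞. -/
/-!
The logarithm of an integer is nonnegative (with `log 0 = 0`), so the `logb` term may be dropped.
Choose `c` strictly between `2 / ε` and the liminf, and `s` strictly between `2 / c` and `ε`.
Eventually `a (n+1) < (2 - s) a n` and `a n > c (n + 1)`, whence
`a (n+1) - 2 a n + 2 (n + 1) < (2 - s c) (n + 1)`, a linear function of negative slope.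
-/

open Filter Topology Set

lemma Real.logb_intCast_nonneg {b : ℝ} (hb : 1 < b) (m : ℤ) : 0 ≤ Real.logb b m :=
  div_nonneg (Real.log_intCast_nonneg m) (Real.log_nonneg hb.le)

lemma tendsto_sub_two_mul_sub_logb_atBot (a : ℕ → ℤ) {s c : ℝ} (hc : 0 < c) (hsc : 2 < s * c)
    (hratio : ∀ᶠ n in atTop, (a (n+1) : ℝ) / a n < 2 - s)
    (hgrowth : ∀ᶠ n in atTop, c < (a n : ℝ) / ((n : ℝ) + 1)) :
    Tendsto (fun n : ℕ =>
        (a (n+1) : ℝ) - 2 * (a n : ℝ) + 2 * (n + 1)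
          - Real.logb 2 ((a (n+1) : ℝ) - (a n : ℝ))) atTop atBot := by
  have hs : 0 < s := pos_of_mul_pos_left (two_pos.trans hsc) hc.le
  have hslope : Tendsto (fun n : ℕ => (2 - s * c) * ((n : ℝ) + 1)) atTop atBot :=
    (tendsto_atTop_add_const_right _ 1 tendsto_natCast_atTop_atTop).const_mul_atTop_of_neg
      (by linarith)
  refine tendsto_atBot_mono' atTop ?_ hslope
  filter_upwards [hratio, hgrowth] with n hratio_n hgrowth_n
  have hn : (0 : ℝ) < n + 1 := by positivity
  have hlin : c * (n + 1) < a n := (lt_div_iff₀ hn).1 hgrowth_n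
  have han : (0 : ℝ) < a n := lt_trans (by positivity) hlin
  have hnext : (a (n+1) : ℝ) < (2 - s) * a n := (div_lt_iff₀ han).1 hratio_n
  have hlog : 0 ≤ Real.logb 2 ((a (n+1) : ℝ) - (a n : ℝ)) := by
    exact_mod_cast Real.logb_intCast_nonneg one_lt_two (a (n+1) - a n)
  nlinarith [mul_le_mul_of_nonneg_left hlin.le hs.le]

theorem cond_of_limsup_liminf_general
    (a : ℕ → ℕ)
    (ε : ℝ) (hε0 : 0 < ε) (hε1 : ε ≤ 1)
    (hsup : Filter.limsup (fun n : ℕ => (a (n+1) : ℝ) / (a n : ℝ)) atTop = 2 - ε)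
    (hinf : 2 / ε < Filter.liminf (fun n : ℕ => (a n : ℝ) / ((n : ℝ) + 1)) atTop) :
    Tendsto (fun n : ℕ =>
        (a (n+1) : ℝ) - 2 * (a n : ℝ) + 2 * (n + 1)
          - Real.logb 2 ((a (n+1) : ℝ) - (a n : ℝ))) atTop atBot := by
  -- `limsup` of an unbounded real sequence is the junk value `0 ≠ 2 - ε`.
  have hbdd : IsBoundedUnder (· ≤ ·) atTop (fun n : ℕ => (a (n+1) : ℝ) / (a n : ℝ)) := by
    by_contra h
    rw [Real.limsup_of_not_isBoundedUnder h] at hsup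
    linarith
  obtain ⟨c, hεc, hcL⟩ := exists_between hinf
  have hc : 0 < c := lt_trans (by positivity) hεc
  have hcε : 2 / c < ε := (div_lt_iff₀ hc).2 (by linarith [(div_lt_iff₀ hε0).1 hεc])
  obtain ⟨s, hcs, hsε⟩ := exists_between hcε
  have hratio := eventually_lt_of_limsup_lt (hsup.trans_lt (by linarith : 2 - ε < 2 - s)) hbdd
  have hgrowth := eventually_lt_of_lt_liminf hcL
    (isBoundedUnder_of_eventually_ge (Eventually.of_forall fun n => by positivity))
  simpa using tendsto_sub_two_mul_sub_logb_atBot (a ·) hc ((div_lt_iff₀ hc).1 hcs)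
    (by simpa using hratio) (by simpa using hgrowth)

theorem cond_of_limsup_liminf
    (a : ℕ → ℕ) (ha : StrictMono a) (ha1 : 1 ≤ a 0)
    (ε : ℝ) (hε0 : 0 < ε) (hε1 : ε ≤ 1)
    (hsup : Filter.limsup (fun n : ℕ => (a (n+1) : ℝ) / (a n : ℝ)) atTop = 2 - ε)
    (hinf : 2 / ε < Filter.liminf (fun n : ℕ => (a n : ℝ) / ((n : ℝ) + 1)) atTop) :
    Tendsto (fun n : ℕ =>
        (a (n+1) : ℝ) - 2 * (a n : ℝ) + 2 * (n + 1)
          - Real.logb 2 ((a (n+1) : ℝ) - (a n : ℝ))) atTop atBot :=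
  cond_of_limsup_liminf_general a ε hε0 hε1 hsup hinf
end

section
/- For a_n = 2^n + ⌈(1+ε)n⌉ with ε > 0 (or a_n = 2^n + (1+ε)n when this is an integer), the quantity a_{n+1} - 2a_n + 2n - log₂(a_{n+1} - a_n) tends to -∞ as n → ∞; whereas for a_n = 2^n + n it does not tend to -∞. -/
open Filter Topology Set

/-!
In `a_{m+1} - 2 a_m` the powers of two cancel, leaving the linear parts, while
`log₂ (a_{m+1} - a_m) = m + O(1)`. For `a_m = 2^m + ⌈(1+ε) m⌉` this gives `-ε m + O(1)`; for
`a_m = 2^m + m` the quantity is exactly `m + 1 - log₂ (2^m + 1) ≥ 0`.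
-/

/-- The sequence is indexed from `0`, so `a n` is the paper's `a_{n+1}` and `expDefect a n` is the
paper's `a_{m+1} - 2 a_m + 2 m - log₂ (a_{m+1} - a_m)` at `m = n + 1`. -/
noncomputable def expDefect (a : ℕ → ℝ) (n : ℕ) : ℝ :=
  a (n + 1) - 2 * a n + 2 * ((n : ℝ) + 1) - Real.logb 2 (a (n + 1) - a n)

lemma natCast_le_logb_of_pow_le {b x : ℝ} (hb : 1 < b) {m : ℕ} (h : b ^ m ≤ x) :
    (m : ℝ) ≤ Real.logb b x := by
  rwa [Real.le_logb_iff_rpow_le hb ((pow_pos (by linarith) m).trans_le h), Real.rpow_natCast]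

lemma logb_le_natCast_of_le_pow {b x : ℝ} (hb : 1 < b) (hx : 0 < x) {m : ℕ} (h : x ≤ b ^ m) :
    Real.logb b x ≤ m := by
  rwa [Real.logb_le_iff_le_rpow hb hx, Real.rpow_natCast]

lemma expDefect_le_of_two_pow_le {a : ℕ → ℝ} {n : ℕ} (h : 2 ^ (n + 1) ≤ a (n + 1) - a n) :
    expDefect a n ≤ a (n + 1) - 2 * a n + ((n : ℝ) + 1) := by
  have hlog := natCast_le_logb_of_pow_le one_lt_two h
  push_cast at hlog
  unfold expDefect
  linarith

lemma natCeil_mul_succ_mono {r : ℝ} (hr : 0 ≤ r) (n : ℕ) :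
    (⌈r * ((n : ℝ) + 1)⌉₊ : ℝ) ≤ ⌈r * (((n + 1 : ℕ) : ℝ) + 1)⌉₊ := by
  gcongr
  linarith

lemma natCeil_mul_succ_sub_two_mul_lt {r : ℝ} (hr : 0 ≤ r) (n : ℕ) :
    (⌈r * (((n + 1 : ℕ) : ℝ) + 1)⌉₊ : ℝ) - 2 * ⌈r * ((n : ℝ) + 1)⌉₊ < 1 - r * n := by
  have hupper := Nat.ceil_lt_add_one (a := r * (((n + 1 : ℕ) : ℝ) + 1)) (by positivity)
  have hlower := Nat.le_ceil (r * ((n : ℝ) + 1))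
  push_cast at hupper ⊢
  linarith

lemma logb_two_pow_add_one_le (n : ℕ) : Real.logb 2 (2 ^ n + 1) ≤ n + 1 := by
  have h : (2 : ℝ) ^ n + 1 ≤ 2 ^ (n + 1) := by
    rw [pow_succ]; linarith [one_le_pow₀ (M₀ := ℝ) one_le_two (n := n)]
  exact_mod_cast logb_le_natCast_of_le_pow one_lt_two (by positivity) h

theorem cond_exponential_examples (ε : ℝ) (hε : 0 < ε) :
    (Tendsto (fun n : ℕ =>
        (fun k : ℕ => ((2:ℝ)^(k+1) + ⌈(1 + ε) * ((k:ℝ) + 1)⌉₊)) (n+1)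
          - 2 * (fun k : ℕ => ((2:ℝ)^(k+1) + ⌈(1 + ε) * ((k:ℝ) + 1)⌉₊)) n + 2 * ((n:ℝ) + 1)
          - Real.logb 2 ((fun k : ℕ => ((2:ℝ)^(k+1) + ⌈(1 + ε) * ((k:ℝ) + 1)⌉₊)) (n+1)
            - (fun k : ℕ => ((2:ℝ)^(k+1) + ⌈(1 + ε) * ((k:ℝ) + 1)⌉₊)) n)) atTop atBot) ∧
    ¬ (Tendsto (fun n : ℕ =>
        ((2:ℝ)^(n+2) + ((n:ℝ) + 2))
          - 2 * ((2:ℝ)^(n+1) + ((n:ℝ) + 1)) + 2 * ((n:ℝ) + 1)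
          - Real.logb 2 (((2:ℝ)^(n+2) + ((n:ℝ) + 2))
            - ((2:ℝ)^(n+1) + ((n:ℝ) + 1)))) atTop atBot) := by
  have hr : 0 ≤ 1 + ε := by linarith
  refine ⟨?_, fun h => ?_⟩
  · set a : ℕ → ℝ := fun k => (2:ℝ)^(k+1) + ⌈(1 + ε) * ((k:ℝ) + 1)⌉₊
    have hbound (n : ℕ) : expDefect a n ≤ 2 + -ε * n := by
      have hmono := natCeil_mul_succ_mono hr n
      have hstep := natCeil_mul_succ_sub_two_mul_lt hr n
      have hpow : (2:ℝ) ^ (n + 1 + 1) = 2 * 2 ^ (n + 1) := pow_succ' _ _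
      refine (expDefect_le_of_two_pow_le ?_).trans ?_ <;> simp only [a] <;> linarith
    exact tendsto_atBot_mono hbound <| tendsto_atBot_add_const_left _ 2 <|
      tendsto_natCast_atTop_atTop.const_mul_atTop_of_neg (neg_lt_zero.2 hε)
  · obtain ⟨n, hn⟩ := (h.eventually (eventually_lt_atBot 0)).exists
    have hlog := logb_two_pow_add_one_le (n + 1)
    rw [show (2:ℝ)^(n+2) + ((n:ℝ) + 2) - ((2:ℝ)^(n+1) + ((n:ℝ) + 1)) = 2^(n+1) + 1 by ring] at hn
    push_cast at hlog
    linarith [pow_succ (2:ℝ) (n + 1)]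
end

section
/- Let c ≥ 1 be a real number and define f : {0,1,2,...} → ℝ by f(m) = (1 - 2^{-m})(c - m). If m* is the largest nonnegative integer at which f attains its maximum, then log₂ c - 2 < m* ≤ log₂ c + 1. -/
/-!
The increment of `f(m) = (1 - 2⁻ᵐ)(c - m)` is `f(m+1) - f(m) = (c - m + 1) / 2^(m+1) - 1`.
Since `m*` is the largest maximiser, `f` drops strictly from `m*` to `m* + 1`, which gives
`c < 2^(m*+1) + m* - 1 < 2^(m*+2)`; and if `m* ≥ 1` it does not drop from `m* - 1` to `m*`,
which gives `2^m* ≤ c - m* + 2 ≤ 2c`.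
-/

open Filter Topology Set

noncomputable def payoff (c : ℝ) (m : ℕ) : ℝ := (1 - (1 / 2 : ℝ) ^ m) * (c - m)

lemma payoff_succ_sub (c : ℝ) (m : ℕ) :
    payoff c (m + 1) - payoff c m = (c - m + 1) / 2 ^ (m + 1) - 1 := by
  simp only [payoff, one_div, inv_pow, Nat.cast_succ]
  field_simp
  ring

lemma payoff_le_payoff_succ_iff (c : ℝ) (m : ℕ) :
    payoff c m ≤ payoff c (m + 1) ↔ 2 ^ (m + 1) ≤ c - m + 1 := by
  rw [← sub_nonneg, payoff_succ_sub, sub_nonneg, one_le_div (by positivity)]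

lemma lt_two_pow_add_two_of_payoff_succ_lt {c : ℝ} {m : ℕ}
    (h : payoff c (m + 1) < payoff c m) : c < 2 ^ (m + 2) := by
  rw [← not_le, payoff_le_payoff_succ_iff, not_le] at h
  have hm : (m : ℝ) < 2 ^ m := by exact_mod_cast Nat.lt_two_pow_self
  calc c < 2 ^ (m + 1) + m - 1 := by linarith
    _ ≤ 2 ^ (m + 2) := by rw [pow_succ, pow_succ, pow_succ]; linarith

lemma two_pow_le_two_mul_of_payoff_le {c : ℝ} (hc : 1 ≤ c) {m : ℕ}
    (hmax : ∀ k, payoff c k ≤ payoff c m) : 2 ^ m ≤ 2 * c := by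
  rcases m with _ | k
  · linarith [pow_zero (2 : ℝ)]
  · have hk := (payoff_le_payoff_succ_iff c k).1 (hmax k)
    have : (0 : ℝ) ≤ k := k.cast_nonneg
    linarith

theorem maximizer_estimate (c : ℝ) (hc : 1 ≤ c) (mstar : ℕ)
    (hmax : ∀ m : ℕ, (1 - (1/2 : ℝ)^m) * (c - m) ≤ (1 - (1/2 : ℝ)^mstar) * (c - mstar))
    (hlargest : ∀ m : ℕ,
      (1 - (1/2 : ℝ)^m) * (c - m) = (1 - (1/2 : ℝ)^mstar) * (c - mstar) → m ≤ mstar) :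
    Real.logb 2 c - 2 < mstar ∧ (mstar : ℝ) ≤ Real.logb 2 c + 1 := by
  have hc0 : 0 < c := by linarith
  have hdrop : payoff c (mstar + 1) < payoff c mstar :=
    (hmax (mstar + 1)).lt_of_ne fun h => (hlargest _ h).not_gt (Nat.lt_succ_self mstar)
  have hlow := lt_two_pow_add_two_of_payoff_succ_lt hdrop
  have hup := two_pow_le_two_mul_of_payoff_le hc hmax
  constructor
  · have hlog := Real.logb_lt_logb one_lt_two hc0 hlow
    rw [Real.logb_pow, Real.logb_self_eq_one (by norm_num)] at hlog
    push_cast at hlog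
    linarith
  · have hlog := Real.logb_le_logb_of_le one_lt_two (by positivity) hup
    rw [Real.logb_pow, Real.logb_mul (by norm_num) hc0.ne', Real.logb_self_eq_one (by norm_num)]
      at hlog
    linarith
end
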